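/- arXiv:1205.1599 — 2 statements merged into one kernel-verified Lean document; each statement's English description precedes it below -/
import Mathlib

section
/- Let q be an odd prime power, n ≥ 2, and let α ∈ F_q[x] be a nonzero polynomial with deg α < n. Let a_1, …, a_{n−1} be indeterminates over F_q, put f(x) = x^n + a_{n−1}x^{n−1} + ⋯ + a_1 x ∈ F_q[a_1,…,a_{n−1}][x], and let D_f(t) = disc_x(f(x)+t) and D_{f+α}(t) = disc_x(f(x)+α(x)+t), both polynomials in t of degree at most n−1 with coefficients in F_q[a_1,…,a_{n−1}]. Then the resultant R(a) = Res_t(D_f(t), D_{f+α}(t)), taken with respect to the formal degree n−1 in t for both polynomials, has total degree at most 3(n−1)² as a polynomial in a_1, …, a_{n−1}. -/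
open Polynomial

noncomputable section
open scoped Classical

/-- The Sylvester matrix of `P` and `Q` with respect to formal degrees `m` and `n`. -/
def sylvesterMatrix {R : Type*} [CommRing R] (m n : ℕ) (P Q : Polynomial R) :
    Matrix (Fin (n + m)) (Fin (n + m)) R :=
  Matrix.of fun i j =>
    if (i : ℕ) < n then
      (if (i : ℕ) ≤ (j : ℕ) ∧ (j : ℕ) ≤ (i : ℕ) + m then P.coeff (m + i - j) else 0)
    else
      (if (i : ℕ) - n ≤ (j : ℕ) ∧ (j : ℕ) ≤ (i : ℕ) then Q.coeff ((i : ℕ) - j) else 0)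

/-- The resultant of `P` and `Q` with respect to formal degrees `m` and `n`:
the determinant of the `(m+n) × (m+n)` Sylvester matrix. -/
def presultant {R : Type*} [CommRing R] (m n : ℕ) (P Q : Polynomial R) : R :=
  (sylvesterMatrix m n P Q).det

/-- The discriminant of a polynomial `P` of degree `m`; for monic `P` this agrees with the
standard discriminant `∏_{i<j} (r_i - r_j)²` over the roots of `P` in an algebraic closure. -/
def pdisc {R : Type*} [CommRing R] (P : Polynomial R) : R :=
  (-1) ^ (P.natDegree * (P.natDegree - 1) / 2) *
    presultant P.natDegree (P.natDegree - 1) P (Polynomial.derivative P)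

/-- `Dpoly g` is `D_g(t) = disc_x (g(x) + t)`, a polynomial in `t`. -/
def Dpoly {R : Type*} [CommRing R] (g : Polynomial R) : Polynomial R :=
  pdisc (g.map Polynomial.C + Polynomial.C Polynomial.X)

/-- `fPoly n a = x^n + a_{n-1} x^{n-1} + ... + a_1 x`. -/
def fPoly {R : Type*} [CommRing R] (n : ℕ) (a : Fin (n - 1) → R) : Polynomial R :=
  X ^ n + ∑ i : Fin (n - 1), Polynomial.C (a i) * X ^ ((i : ℕ) + 1)


/-!
View a polynomial in `t` over `F[a]` as a polynomial in `(a, t)` through `optionEquivLeft`.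
The `x`-coefficients of `f(x) + α(x) + t` have total degree at most one and its leading
coefficient is `1`, so in its Sylvester matrix with its `x`-derivative every entry has degree
at most one and the first column is constant: `D_f` and `D_{f+α}` have degree at most
`2(n-1)` in `(a, t)`. In the Sylvester matrix of two polynomials in `t` of degrees `w, w'` in
`(a, t)`, the entry in row `i` and column `j` is the coefficient of `t ^ (ρ i - j)` for a row
shift `ρ`, of degree at most `w - ρ i + j` (resp. `w' - ρ i + j`); along any permutation
these bounds sum to `n w + m w' - m n`, which is `3(n-1)²` here.
-/

theorem MvPolynomial.totalDegree_units_smul {σ R : Type*} [CommRing R] (u : ℤˣ)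
    (p : MvPolynomial σ R) : (u • p).totalDegree = p.totalDegree := by
  rcases Int.units_eq_one_or u with rfl | rfl <;> simp [Units.smul_def, totalDegree_neg]

theorem MvPolynomial.totalDegree_det_le {ι σ R : Type*} [Fintype ι] [DecidableEq ι] [CommRing R]
    (M : Matrix ι ι (MvPolynomial σ R)) (a b : ι → ℤ)
    (hM : ∀ i j, M i j ≠ 0 → ((M i j).totalDegree : ℤ) ≤ a i - b j) (hdet : M.det ≠ 0) :
    (M.det.totalDegree : ℤ) ≤ ∑ i, a i - ∑ j, b j := by
  have hterm : ∀ τ : Equiv.Perm ι, Equiv.Perm.sign τ • ∏ i, M (τ i) i ≠ 0 →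
      ((Equiv.Perm.sign τ • ∏ i, M (τ i) i).totalDegree : ℤ) ≤ ∑ i, a i - ∑ j, b j := by
    intro τ hτ
    have hprod : ∏ i, M (τ i) i ≠ 0 := fun h => hτ (by rw [h, smul_zero])
    calc ((Equiv.Perm.sign τ • ∏ i, M (τ i) i).totalDegree : ℤ)
        ≤ ∑ i, ((M (τ i) i).totalDegree : ℤ) := by
          rw [totalDegree_units_smul]
          exact_mod_cast totalDegree_finsetProd _ _
      _ ≤ ∑ i, (a (τ i) - b i) := Finset.sum_le_sum fun i _ =>
          hM _ _ fun h => hprod (Finset.prod_eq_zero (Finset.mem_univ i) h)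
      _ = ∑ i, a i - ∑ j, b j := by rw [Finset.sum_sub_distrib, Equiv.sum_comp τ a]
  rw [Matrix.det_apply] at hdet ⊢
  obtain ⟨τ, -, hτ⟩ := Finset.exists_ne_zero_of_sum_ne_zero hdet
  have hnonneg : 0 ≤ ∑ i, a i - ∑ j, b j := (Int.natCast_nonneg _).trans (hterm τ hτ)
  rw [← Int.toNat_of_nonneg hnonneg, Nat.cast_le]
  refine totalDegree_finsetSum_le fun τ _ => ?_
  by_cases hτ : Equiv.Perm.sign τ • ∏ i, M (τ i) i = 0
  · simp [hτ]
  · have := hterm τ hτ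
    omega

section Sylvester

variable {R : Type*} [CommRing R] {m n : ℕ} {P Q : R[X]}

theorem sylvesterMatrix_map {S : Type*} [CommRing S] (f : R →+* S) :
    sylvesterMatrix m n (P.map f) (Q.map f) = (sylvesterMatrix m n P Q).map f := by
  ext i j
  simp only [sylvesterMatrix, Matrix.of_apply, Matrix.map_apply, coeff_map]
  split_ifs <;> simp

theorem presultant_map {S : Type*} [CommRing S] (f : R →+* S) :
    presultant m n (P.map f) (Q.map f) = f (presultant m n P Q) := by
  rw [presultant, presultant, sylvesterMatrix_map, RingHom.map_det]
  rfl

theorem pdisc_map {S : Type*} [CommRing S] {f : R →+* S} (hf : Function.Injective f) :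
    pdisc (P.map f) = f (pdisc P) := by
  simp [pdisc, natDegree_map_eq_of_injective hf, derivative_map, presultant_map]

theorem sylvesterMatrix_eq_coeff_of_ne_zero {i j : Fin (n + m)}
    (h : sylvesterMatrix m n P Q i j ≠ 0) :
    ((i : ℕ) < n ∧ (i : ℕ) ≤ j ∧ (j : ℕ) ≤ i + m ∧
        sylvesterMatrix m n P Q i j = P.coeff (m + i - j)) ∨
      (n ≤ (i : ℕ) ∧ (i : ℕ) - n ≤ j ∧ (j : ℕ) ≤ i ∧
        sylvesterMatrix m n P Q i j = Q.coeff (i - j)) := by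
  simp only [sylvesterMatrix, Matrix.of_apply] at h ⊢
  split_ifs at h ⊢ with hi hj hj
  · exact .inl ⟨hi, hj.1, hj.2, rfl⟩
  · exact absurd rfl h
  · exact .inr ⟨by omega, hj.1, hj.2, rfl⟩
  · exact absurd rfl h

end Sylvester

section DegreeBounds

open MvPolynomial (optionEquivLeft)

variable {R σ : Type*} [CommRing R]

theorem totalDegree_coeff_add_le_totalDegree_optionEquivLeft_symm {P : (MvPolynomial σ R)[X]}
    {k : ℕ} (hk : P.coeff k ≠ 0) :
    (P.coeff k).totalDegree + k ≤ ((optionEquivLeft R σ).symm P).totalDegree := by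
  obtain ⟨p, rfl⟩ := (optionEquivLeft R σ).surjective P
  rw [AlgEquiv.symm_apply_apply]
  refine MvPolynomial.totalDegree_coeff_optionEquivLeft_add_le _ _ p k ?_
  calc k ≤ (optionEquivLeft R σ p).natDegree := le_natDegree_of_ne_zero hk
    _ = p.degreeOf none := MvPolynomial.natDegree_optionEquivLeft R p
    _ ≤ p.totalDegree := MvPolynomial.degreeOf_le_totalDegree p none

variable {m n : ℕ} {P Q : (MvPolynomial σ R)[X]}

theorem totalDegree_presultant_le_of_coeff_le_one
    (hP : ∀ k, (P.coeff k).totalDegree ≤ 1) (hQ : ∀ k, (Q.coeff k).totalDegree ≤ 1)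
    (hPm : (P.coeff m).totalDegree = 0) (hQn : (Q.coeff n).totalDegree = 0) :
    (presultant m n P Q).totalDegree ≤ m + n - 1 := by
  rw [presultant]
  by_cases hdet : (sylvesterMatrix m n P Q).det = 0
  · simp [hdet]
  have hcol : ∑ j : Fin (n + m), (if (j : ℕ) = 0 then (1 : ℤ) else 0) =
      if 0 < n + m then 1 else 0 := by
    rw [Fin.sum_univ_eq_sum_range (fun j => if j = 0 then (1 : ℤ) else 0), Finset.sum_ite_eq']
    simp
  have hdeg := MvPolynomial.totalDegree_det_le (sylvesterMatrix m n P Q) (fun _ => 1)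
    (fun j => if (j : ℕ) = 0 then 1 else 0) ?_ hdet
  · simp only [Finset.sum_const, Finset.card_univ, Fintype.card_fin, nsmul_one, hcol] at hdeg
    split_ifs at hdeg <;> omega
  intro i j hij
  rcases sylvesterMatrix_eq_coeff_of_ne_zero hij with ⟨hi, hij, hjm, he⟩ | ⟨hi, hij, hji, he⟩ <;>
    rw [he] <;> split_ifs with hj
  · rw [show m + (i : ℕ) - j = m by omega, hPm]; simp
  · simpa using hP _
  · rw [show (i : ℕ) - j = n by omega, hQn]; simp
  · simpa using hQ _

theorem totalDegree_presultant_le {w w' : ℕ}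
    (hP : ((optionEquivLeft R σ).symm P).totalDegree ≤ w)
    (hQ : ((optionEquivLeft R σ).symm Q).totalDegree ≤ w') :
    (presultant m n P Q).totalDegree ≤ n * w + m * w' - m * n := by
  rw [presultant]
  by_cases hdet : (sylvesterMatrix m n P Q).det = 0
  · simp [hdet]
  have hdeg := MvPolynomial.totalDegree_det_le (sylvesterMatrix m n P Q)
    (fun i => (if (i : ℕ) < n then (w : ℤ) - m else w') - i) (fun j => -(j : ℤ)) ?_ hdet
  · have hsum : ∑ i : Fin (n + m), ((if (i : ℕ) < n then (w : ℤ) - m else w') - i) -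
        ∑ j : Fin (n + m), -(j : ℤ) = ((n * w + m * w' : ℕ) : ℤ) - ((m * n : ℕ) : ℤ) := by
      rw [Finset.sum_sub_distrib, Finset.sum_neg_distrib, sub_neg_eq_add, sub_add_cancel,
        Fin.sum_univ_add]
      simp only [Fin.val_castAdd, Fin.is_lt, ↓reduceIte, Finset.sum_sub_distrib, Finset.sum_const,
        Finset.card_univ, Fintype.card_fin, Int.nsmul_eq_mul, Fin.val_natAdd, add_lt_iff_neg_left,
        not_lt_zero, Nat.cast_add, Nat.cast_mul]
      ring
    rw [hsum] at hdeg
    omega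
  intro i j hij
  rcases sylvesterMatrix_eq_coeff_of_ne_zero hij with ⟨hi, hij', hjm, he⟩ | ⟨hi, hij', hji, he⟩ <;>
    rw [he] at hij ⊢
  · have := (totalDegree_coeff_add_le_totalDegree_optionEquivLeft_symm hij).trans hP
    simp only [if_pos hi]
    omega
  · have := (totalDegree_coeff_add_le_totalDegree_optionEquivLeft_symm hij).trans hQ
    simp only [if_neg (not_lt.mpr hi)]
    omega

end DegreeBounds

section Discriminant

open MvPolynomial (optionEquivLeft rename)

variable {R σ : Type*} [CommRing R]

theorem totalDegree_coeff_derivative_le (P : (MvPolynomial σ R)[X]) (k : ℕ) :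
    ((derivative P).coeff k).totalDegree ≤ (P.coeff (k + 1)).totalDegree := by
  rw [coeff_derivative, ← Nat.cast_succ, ← map_natCast (MvPolynomial.C : R →+* _)]
  exact (MvPolynomial.totalDegree_mul _ _).trans (by rw [MvPolynomial.totalDegree_C, add_zero])

theorem totalDegree_pdisc_le {P : (MvPolynomial σ R)[X]} (hP : ∀ k, (P.coeff k).totalDegree ≤ 1)
    (hlead : P.leadingCoeff.totalDegree = 0) :
    (pdisc P).totalDegree ≤ 2 * P.natDegree - 2 := by
  have hP' (k : ℕ) : ((derivative P).coeff k).totalDegree ≤ 1 :=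
    (totalDegree_coeff_derivative_le P k).trans (hP _)
  have hP'lead : ((derivative P).coeff (P.natDegree - 1)).totalDegree = 0 := by
    refine Nat.eq_zero_of_le_zero ((totalDegree_coeff_derivative_le P _).trans ?_)
    rcases Nat.eq_zero_or_pos P.natDegree with h | h
    · simp [h, coeff_eq_zero_of_natDegree_lt (h ▸ zero_lt_one : P.natDegree < 1)]
    · rw [Nat.sub_add_cancel h]
      exact hlead.le
  have hres := totalDegree_presultant_le_of_coeff_le_one hP hP' hlead hP'lead
  rw [pdisc]
  rcases neg_one_pow_eq_or (MvPolynomial σ R) (P.natDegree * (P.natDegree - 1) / 2) with h | h <;>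
    rw [h] <;> simp only [one_mul, neg_one_mul, MvPolynomial.totalDegree_neg] <;> omega

theorem MvPolynomial.optionEquivLeft_symm_C (c : MvPolynomial σ R) :
    (optionEquivLeft R σ).symm (Polynomial.C c) = rename some c := by
  induction c using MvPolynomial.induction_on with
  | C r => simp
  | add p q hp hq => simp [hp, hq]
  | mul_X p i hp => simp [hp]

theorem totalDegree_Dpoly_le {g : (MvPolynomial σ R)[X]} (hpos : 0 < g.natDegree)
    (hg : ∀ k, (g.coeff k).totalDegree ≤ 1) (hlead : g.leadingCoeff.totalDegree = 0) :
    ((optionEquivLeft R σ).symm (Dpoly g)).totalDegree ≤ 2 * g.natDegree - 2 := by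
  let e : (MvPolynomial σ R)[X] →+* MvPolynomial (Option σ) R := (optionEquivLeft R σ).symm
  set G := (g.map Polynomial.C + Polynomial.C Polynomial.X).map e
  have hcoeff (k : ℕ) :
      G.coeff k = rename some (g.coeff k) + if k = 0 then MvPolynomial.X none else 0 := by
    by_cases hk : k = 0 <;> simp [G, e, hk, coeff_C, MvPolynomial.optionEquivLeft_symm_C]
  have hdeg : G.natDegree = g.natDegree := by
    refine natDegree_eq_of_le_of_coeff_ne_zero ?_ ?_
    · refine natDegree_le_iff_coeff_eq_zero.mpr fun k hk => ?_
      rw [hcoeff, coeff_eq_zero_of_natDegree_lt hk, if_neg (by omega), map_zero, add_zero]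
    · rw [hcoeff, if_neg hpos.ne', add_zero, ← leadingCoeff]
      exact (MvPolynomial.rename_injective some (Option.some_injective σ)).ne_iff.mpr
        (leadingCoeff_ne_zero.mpr (ne_zero_of_natDegree_gt hpos)) |>.trans_eq (map_zero _)
  have hDpoly : (optionEquivLeft R σ).symm (Dpoly g) = pdisc G :=
    (pdisc_map (optionEquivLeft R σ).symm.injective).symm
  rw [hDpoly, ← hdeg]
  refine totalDegree_pdisc_le (fun k => ?_) ?_
  · rw [hcoeff]
    refine (MvPolynomial.totalDegree_add _ _).trans (max_le ?_ ?_)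
    · exact (MvPolynomial.totalDegree_rename_le _ _).trans (hg k)
    · split_ifs
      · exact (MvPolynomial.totalDegree_monomial_le (Finsupp.single none 1) 1).trans_eq (by simp)
      · exact (MvPolynomial.totalDegree_zero).trans_le zero_le_one
  · rw [leadingCoeff, hdeg, hcoeff, if_neg hpos.ne', add_zero]
    exact Nat.eq_zero_of_le_zero ((MvPolynomial.totalDegree_rename_le some _).trans hlead.le)

end Discriminant

section fPoly

open MvPolynomial (optionEquivLeft)

variable {R : Type*} [CommRing R] {n : ℕ}

theorem coeff_fPoly (a : Fin (n - 1) → R) (k : ℕ) :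
    (fPoly n a).coeff k =
      (if k = n then 1 else 0) + ∑ i : Fin (n - 1), if k = i + 1 then a i else 0 := by
  simp [fPoly, coeff_X_pow]

theorem degree_fPoly_sub_X_pow_lt (a : Fin (n - 1) → R) :
    (fPoly n a - X ^ n).degree < (n : WithBot ℕ) := by
  rw [fPoly, add_sub_cancel_left]
  refine (degree_sum_le _ _).trans_lt
    ((Finset.sup_lt_iff (WithBot.bot_lt_coe n)).mpr fun i _ => ?_)
  exact (degree_C_mul_X_pow_le _ _).trans_lt (Nat.cast_lt.mpr (by omega))

theorem monic_fPoly (a : Fin (n - 1) → R) : (fPoly n a).Monic := by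
  simpa using monic_X_pow_add (degree_fPoly_sub_X_pow_lt a)

theorem natDegree_fPoly [Nontrivial R] (a : Fin (n - 1) → R) : (fPoly n a).natDegree = n := by
  rw [← add_sub_cancel (X ^ n) (fPoly n a), natDegree_add_eq_left_of_degree_lt, natDegree_X_pow]
  simpa using degree_fPoly_sub_X_pow_lt a

theorem totalDegree_coeff_fPoly_le {σ : Type*} {a : Fin (n - 1) → MvPolynomial σ R}
    (ha : ∀ i, (a i).totalDegree ≤ 1) (k : ℕ) : ((fPoly n a).coeff k).totalDegree ≤ 1 := by
  rw [coeff_fPoly]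
  refine (MvPolynomial.totalDegree_add _ _).trans (max_le ?_ ?_)
  · split_ifs <;> simp
  · refine MvPolynomial.totalDegree_finsetSum_le fun i _ => ?_
    split_ifs
    · exact ha i
    · simp

theorem totalDegree_Dpoly_fPoly_add_le [Nontrivial R] (hn : 0 < n) {α : R[X]}
    (hα : α.degree < n) :
    ((optionEquivLeft R (Fin (n - 1))).symm
      (Dpoly (fPoly n MvPolynomial.X + α.map MvPolynomial.C))).totalDegree ≤ 2 * (n - 1) := by
  set a : Fin (n - 1) → MvPolynomial (Fin (n - 1)) R := MvPolynomial.X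
  set β := α.map (MvPolynomial.C : R →+* MvPolynomial (Fin (n - 1)) R)
  set g := fPoly n a + β
  have hαC : β.degree < (fPoly n a).degree := by
    rw [degree_eq_natDegree (monic_fPoly _).ne_zero, natDegree_fPoly]
    exact degree_map_le.trans_lt hα
  have hmonic : g.Monic := (monic_fPoly _).add_of_left hαC
  have hdeg : g.natDegree = n :=
    (natDegree_add_eq_left_of_degree_lt hαC).trans (natDegree_fPoly _)
  have hcoeff (k : ℕ) : (g.coeff k).totalDegree ≤ 1 := by
    rw [coeff_add, coeff_map]
    refine (MvPolynomial.totalDegree_add _ _).trans (max_le ?_ (by simp))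
    exact totalDegree_coeff_fPoly_le (fun i => (MvPolynomial.totalDegree_X (R := R) i).le) k
  have h := totalDegree_Dpoly_le (hdeg.symm ▸ hn : 0 < g.natDegree) hcoeff
    (by rw [hmonic.leadingCoeff, MvPolynomial.totalDegree_one])
  rw [hdeg] at h
  omega

end fPoly

theorem resultant_totalDegree_le_general (n : ℕ) (hn : 2 ≤ n)
    (F : Type) [Field F]
    (α : Polynomial F) (hdeg : α.degree < n)
    (Df Dfα : Polynomial (MvPolynomial (Fin (n - 1)) F))
    (hDf : Df = pdisc ((X : Polynomial (Polynomial (MvPolynomial (Fin (n - 1)) F))) ^ n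
        + ∑ i : Fin (n - 1),
            Polynomial.C (Polynomial.C (MvPolynomial.X i)) * X ^ ((i : ℕ) + 1)
        + Polynomial.C Polynomial.X))
    (hDfα : Dfα = pdisc ((X : Polynomial (Polynomial (MvPolynomial (Fin (n - 1)) F))) ^ n
        + ∑ i : Fin (n - 1),
            Polynomial.C (Polynomial.C (MvPolynomial.X i)) * X ^ ((i : ℕ) + 1)
        + α.map ((Polynomial.C : MvPolynomial (Fin (n - 1)) F →+*
            Polynomial (MvPolynomial (Fin (n - 1)) F)).comp
            (MvPolynomial.C : F →+* MvPolynomial (Fin (n - 1)) F))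
        + Polynomial.C Polynomial.X)) :
    (presultant (n - 1) (n - 1) Df Dfα).totalDegree ≤ 3 * (n - 1) ^ 2 := by
  have hf : Df = Dpoly (fPoly n MvPolynomial.X + (0 : F[X]).map MvPolynomial.C) := by
    simp [hDf, Dpoly, fPoly, Polynomial.map_sum]
  have hfα : Dfα = Dpoly (fPoly n MvPolynomial.X + α.map MvPolynomial.C) := by
    simp [hDfα, Dpoly, fPoly, Polynomial.map_sum, Polynomial.map_map]
  have hDf_le := hf ▸ totalDegree_Dpoly_fPoly_add_le (by omega) (by simp)
  have hDfα_le := hfα ▸ totalDegree_Dpoly_fPoly_add_le (by omega) hdeg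
  calc (presultant (n - 1) (n - 1) Df Dfα).totalDegree
      ≤ (n - 1) * (2 * (n - 1)) + (n - 1) * (2 * (n - 1)) - (n - 1) * (n - 1) :=
        totalDegree_presultant_le hDf_le hDfα_le
    _ = 3 * (n - 1) ^ 2 := by
      rw [Nat.sub_eq_iff_eq_add (by nlinarith)]
      ring

/-- For `f(x) = x^n + a_{n-1}x^{n-1} + ⋯ + a_1 x` with indeterminate coefficients over `F_q`
and a polynomial `α` of degree `< n`, the resultant `R(a) = Res_t(D_f(t), D_{f+α}(t))`
(taken with respect to formal degree `n-1` in `t` for both polynomials) has total degree at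
most `3(n-1)²` as a polynomial in `a_1, …, a_{n-1}`. -/
theorem resultant_totalDegree_le (q n : ℕ) (hq : Odd q) (hn : 2 ≤ n)
    (F : Type) [Field F] [Fintype F] (hF : Fintype.card F = q)
    (α : Polynomial F) (hα : α ≠ 0) (hdeg : α.degree < n)
    (Df Dfα : Polynomial (MvPolynomial (Fin (n - 1)) F))
    (hDf : Df = pdisc ((X : Polynomial (Polynomial (MvPolynomial (Fin (n - 1)) F))) ^ n
        + ∑ i : Fin (n - 1),
            Polynomial.C (Polynomial.C (MvPolynomial.X i)) * X ^ ((i : ℕ) + 1)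
        + Polynomial.C Polynomial.X))
    (hDfα : Dfα = pdisc ((X : Polynomial (Polynomial (MvPolynomial (Fin (n - 1)) F))) ^ n
        + ∑ i : Fin (n - 1),
            Polynomial.C (Polynomial.C (MvPolynomial.X i)) * X ^ ((i : ℕ) + 1)
        + α.map ((Polynomial.C : MvPolynomial (Fin (n - 1)) F →+*
            Polynomial (MvPolynomial (Fin (n - 1)) F)).comp
            (MvPolynomial.C : F →+* MvPolynomial (Fin (n - 1)) F))
        + Polynomial.C Polynomial.X)) :
    (presultant (n - 1) (n - 1) Df Dfα).totalDegree ≤ 3 * (n - 1) ^ 2 :=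
  resultant_totalDegree_le_general n hn F α hdeg Df Dfα hDf hDfα
end
end

section
/- Let q be an odd prime power and n ≥ 2. Then there exists a = (a_1,…,a_{n−1}) in the algebraic closure F̄_q of F_q such that, writing f(x) = x^n + a_{n−1}x^{n−1} + ⋯ + a_1 x ∈ F̄_q[x], the polynomial D_f(t) = disc_x(f(x)+t) ∈ F̄_q[t] has positive degree in t and is squarefree. -/
/-!
Let `g` have degree `m` and critical points `β` (the roots of `g'`, with multiplicity). The
discriminant of `g(x) + t` is, up to a unit, the resultant `Res(g', g + t)`, which is
`lc(g')^m ∏_β (g(β) + t)`: so `D_g(t)` is associated to `∏_β (t + g(β))`. It therefore has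
degree `deg g'` and is squarefree as soon as `g` is Morse, i.e. its critical points are simple
and its critical values distinct. In odd characteristic `p` one of `x^n + x`, `x^n + x^2`
(when `p ∣ n`) and `x^n + x^2 + x` (when `p ∣ n - 1`) is Morse and has a critical point.
-/

open Polynomial

noncomputable section
open scoped Classical

namespace Polynomial

section Resultant

variable {R : Type*} [CommRing R]

theorem sylvesterMatrix_eq_submatrix_transpose_sylvester (m n : ℕ) (P Q : R[X]) :
    sylvesterMatrix m n P Q =
      (sylvester P Q m n).transpose.submatrix (Fin.revPerm.trans (finCongr (add_comm n m)))
        (Fin.revPerm.trans (finCongr (add_comm n m))) := by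
  ext i j
  have hj := j.isLt
  simp only [Matrix.submatrix_apply, Matrix.transpose_apply, Equiv.trans_apply]
  generalize hk : finCongr (add_comm n m) (Fin.revPerm i) = k
  have hk' : (k : ℕ) = n + m - 1 - i := by rw [← hk]; simp [Fin.val_rev]; omega
  induction k using Fin.addCases <;>
    simp only [Fin.val_castAdd, Fin.val_natAdd] at hk' <;>
    simp only [sylvesterMatrix, sylvester, Matrix.of_apply, Fin.addCases_left, Fin.addCases_right,
      Set.mem_Icc, Fin.revPerm_apply, finCongr_apply, Fin.val_cast, Fin.val_rev] <;>
    split_ifs <;> first | rfl | omega | (congr 1; omega)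

theorem presultant_eq_resultant (m n : ℕ) (P Q : R[X]) :
    presultant m n P Q = resultant P Q m n := by
  rw [presultant, sylvesterMatrix_eq_submatrix_transpose_sylvester,
    Matrix.det_submatrix_equiv_self, Matrix.det_transpose, resultant]

end Resultant

theorem nodup_roots_of_eval_derivative_ne_zero {R : Type*} [CommRing R] [IsDomain R] {p : R[X]}
    (hp : ∀ x, p.eval x = 0 → (derivative p).eval x ≠ 0) : p.roots.Nodup := by
  rcases eq_or_ne p 0 with rfl | hp0
  · simp
  refine Multiset.nodup_iff_count_le_one.mpr fun x ↦ ?_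
  rw [count_roots]
  by_contra! h
  obtain ⟨hx, hx'⟩ := (one_lt_rootMultiplicity_iff_isRoot hp0).mp h
  exact hp x hx hx'

theorem natDegree_pos_of_eval_derivative_ne_zero {R : Type*} [Semiring R] {p : R[X]} {x : R}
    (h : (derivative p).eval x ≠ 0) : 0 < p.natDegree :=
  Nat.pos_of_ne_zero fun hp ↦ h (by simp [derivative_of_natDegree_zero hp])

variable {K : Type*} [Field K]

theorem squarefree_multiset_prod_X_sub_C {s : Multiset K} (hs : s.Nodup) :
    Squarefree (s.map (X - C ·)).prod := by
  have hsplit : (s.map (X - C ·)).prod.Splits := Splits.multisetProd (by simp [Splits.X_sub_C])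
  refine (nodup_roots_iff_of_splits (monic_multisetProd_X_sub_C s).ne_zero hsplit).mp ?_
    |>.squarefree
  rwa [roots_multiset_prod_X_sub_C]

theorem Dpoly_associated_prod_X_sub_C (g : K[X]) (hg' : derivative g ≠ 0)
    (hsplit : (derivative g).Splits) :
    Associated (Dpoly g)
      (((derivative g).roots.map fun β ↦ -g.eval β).map (X - C ·)).prod := by
  set m := g.natDegree
  set P : K[X][X] := g.map C + C X with hP
  have hm : 0 < m := Nat.pos_of_ne_zero fun h ↦ hg' (derivative_of_natDegree_zero h)
  have hPdeg : P.natDegree = m := by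
    rw [hP, natDegree_add_eq_left_of_natDegree_lt, natDegree_map]
    simpa [natDegree_map] using hm
  have hPcoeff : P.coeff m = C g.leadingCoeff := by
    rw [hP, coeff_add, coeff_map, coeff_C, if_neg hm.ne', add_zero]
    rfl
  have hP' : derivative P = (derivative g).map C := by simp [hP, derivative_map]
  obtain ⟨k, hk⟩ : ∃ k, m - 1 = (derivative g).natDegree + k :=
    Nat.exists_eq_add_of_le (natDegree_derivative_le g)
  have hdeg' : ((derivative g).map C).natDegree = (derivative g).natDegree :=
    natDegree_map_eq_of_injective C_injective _
  have heval : ∀ β, P.eval (C β) = X - C (-g.eval β) := fun β ↦ by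
    simp [hP, eval_map, eval₂_at_apply, add_comm]
  -- `Res(P, P') = ± Res(P', P) = ± lc(g)^k lc(g')^m ∏_β P(β)`, and `P(β) = t + g(β)`
  have key : Dpoly g = ((-1) ^ (m * (m - 1) / 2) * (-1) ^ (m * (m - 1)) * (-1) ^ (m * k) *
      C g.leadingCoeff ^ k * C (derivative g).leadingCoeff ^ m) *
      (((derivative g).roots.map fun β ↦ -g.eval β).map (X - C ·)).prod := by
    rw [Dpoly, pdisc, presultant_eq_resultant, hPdeg, hP', resultant_comm, hk,
      resultant_add_left_deg _ _ _ _ _ hdeg'.le, hPcoeff, ← hdeg',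
      resultant_eq_prod_eval _ _ _ hPdeg.le (hsplit.map C), hsplit.roots_map, Multiset.map_map,
      Multiset.map_map, leadingCoeff_map_of_injective C_injective]
    simp only [Function.comp_def, heval]
    ring
  rw [key]
  refine associated_unit_mul_left _ _ ?_
  have hlc : IsUnit (C g.leadingCoeff) :=
    isUnit_C.mpr (leadingCoeff_ne_zero.mpr (ne_zero_of_natDegree_gt hm)).isUnit
  have hlc' : IsUnit (C (derivative g).leadingCoeff) :=
    isUnit_C.mpr (leadingCoeff_ne_zero.mpr hg').isUnit
  exact ((((isUnit_neg_one.pow _).mul (isUnit_neg_one.pow _)).mul (isUnit_neg_one.pow _)).mul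
    (hlc.pow _)).mul (hlc'.pow _)

theorem natDegree_Dpoly (g : K[X]) (hg' : derivative g ≠ 0) (hsplit : (derivative g).Splits) :
    (Dpoly g).natDegree = (derivative g).natDegree := by
  rw [natDegree_eq_of_degree_eq
      (degree_eq_degree_of_associated (Dpoly_associated_prod_X_sub_C g hg' hsplit)),
    natDegree_multiset_prod_X_sub_C_eq_card, Multiset.card_map, hsplit.natDegree_eq_card_roots]

structure IsMorse (g : K[X]) : Prop where
  eval_derivative_derivative_ne_zero :
    ∀ x, (derivative g).eval x = 0 → (derivative (derivative g)).eval x ≠ 0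
  injOn_eval : Set.InjOn g.eval {x | (derivative g).eval x = 0}

namespace IsMorse

variable {g : K[X]}

theorem derivative_ne_zero (hg : IsMorse g) : derivative g ≠ 0 := fun h ↦
  hg.eval_derivative_derivative_ne_zero 0 (by simp [h]) (by simp [h])

theorem squarefree_Dpoly (hg : IsMorse g) (hsplit : (derivative g).Splits) :
    Squarefree (Dpoly g) := by
  refine (Dpoly_associated_prod_X_sub_C g hg.derivative_ne_zero hsplit).squarefree_iff.mpr
    (squarefree_multiset_prod_X_sub_C ?_)
  refine (nodup_roots_of_eval_derivative_ne_zero hg.eval_derivative_derivative_ne_zero).map_on ?_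
  intro x hx y hy hxy
  exact hg.injOn_eval (isRoot_of_mem_roots hx) (isRoot_of_mem_roots hy) (neg_inj.mp hxy)

end IsMorse

theorem isMorse_X_pow_add_X {n : ℕ} (hn0 : (n : K) ≠ 0) (hn1 : (n : K) ≠ 1) :
    IsMorse (X ^ n + X : K[X]) := by
  obtain _ | _ | k := n
  · simp at hn0
  · simp at hn1
  have hk : (k : K) + 1 ≠ 0 := fun h ↦ hn1 (by push_cast; linear_combination h)
  replace hn0 : (k : K) + 2 ≠ 0 := fun h ↦ hn0 (by push_cast; linear_combination h)
  have hg' : ∀ x, (derivative (X ^ (k + 2) + X : K[X])).eval x = (k + 2) * x ^ (k + 1) + 1 := by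
    intro x
    simp only [derivative_add, derivative_X_pow, derivative_X, eval_add, eval_mul, eval_natCast,
      eval_pow, eval_X, eval_one, map_natCast]
    push_cast
    ring_nf
  have hg'' : ∀ x, (derivative (derivative (X ^ (k + 2) + X : K[X]))).eval x =
      (k + 2) * ((k + 1) * x ^ k) := by
    intro x
    simp only [derivative_add, derivative_X_pow, derivative_X, derivative_mul, derivative_one,
      derivative_natCast, eval_add, eval_mul, eval_natCast, eval_pow, eval_X, map_natCast,
      eval_zero]
    push_cast
    ring_nf
  refine ⟨fun x hx ↦ ?_, fun x hx y hy hxy ↦ ?_⟩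
  · have hx0 : x ≠ 0 := by rintro rfl; simp at hx
    rw [hg'']
    exact mul_ne_zero hn0 (mul_ne_zero hk (pow_ne_zero _ hx0))
  · simp only [Set.mem_ofPred_eq, hg'] at hx hy
    simp only [eval_add, eval_pow, eval_X] at hxy
    -- at a critical point `(k + 2) g(x) = (k + 1) x`
    have : ((k : K) + 1) * (x - y) = 0 := by
      linear_combination (k + 2 : K) * hxy - x * hx + y * hy
    exact sub_eq_zero.mp ((mul_eq_zero.mp this).resolve_left hk)

theorem isMorse_X_pow_add_X_sq {n : ℕ} (h2 : (2 : K) ≠ 0) (hn : (n : K) = 0) :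
    IsMorse (X ^ n + X ^ 2 : K[X]) := by
  have hg' : ∀ x, (derivative (X ^ n + X ^ 2 : K[X])).eval x = 2 * x := by
    simp [derivative_X_pow, hn, one_add_one_eq_two]
  have hg'' : ∀ x, (derivative (derivative (X ^ n + X ^ 2 : K[X]))).eval x = 2 := by
    simp [derivative_X_pow, hn, one_add_one_eq_two]
  have hcrit : ∀ x, (derivative (X ^ n + X ^ 2 : K[X])).eval x = 0 → x = 0 := fun x hx ↦ by
    rw [hg'] at hx
    simpa [h2] using hx
  exact ⟨fun x _ ↦ by rwa [hg''], fun x hx y hy _ ↦ by rw [hcrit x hx, hcrit y hy]⟩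

theorem isMorse_X_pow_add_X_sq_add_X {n : ℕ} (h2 : (2 : K) ≠ 0) (hn : (n : K) = 1) :
    IsMorse (X ^ n + (X ^ 2 + X) : K[X]) := by
  obtain _ | k := n
  · simp at hn
  have hk : (k : K) = 0 := by push_cast at hn; linear_combination hn
  have hg' : ∀ x, (derivative (X ^ (k + 1) + (X ^ 2 + X) : K[X])).eval x =
      x ^ k + 2 * x + 1 := by
    simp [hk, one_add_one_eq_two, add_assoc]
  have hg'' : ∀ x, (derivative (derivative (X ^ (k + 1) + (X ^ 2 + X) : K[X]))).eval x = 2 := by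
    simp [derivative_X_pow, hk, one_add_one_eq_two]
  refine ⟨fun x _ ↦ by rwa [hg''], fun x hx y hy hxy ↦ ?_⟩
  simp only [Set.mem_ofPred_eq, hg'] at hx hy
  simp only [eval_add, eval_pow, eval_X] at hxy
  -- at a critical point `g(x) = -x ^ 2`
  have hsq : (x - y) * (x + y) = 0 := by linear_combination -hxy + x * hx - y * hy
  refine sub_eq_zero.mp ((mul_eq_zero.mp hsq).resolve_right fun hxy' ↦ ?_)
  obtain rfl : y = -x := by linear_combination hxy'
  rcases Nat.even_or_odd k with hk | hk
  · rw [hk.neg_pow] at hy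
    obtain rfl : x = 0 := by
      simpa [h2] using (by linear_combination hx - hy : (2 : K) * (2 * x) = 0)
    rcases k.eq_zero_or_pos with rfl | hk0
    · exact h2 (by linear_combination hx)
    · simp [zero_pow hk0.ne'] at hx
  · rw [hk.neg_pow] at hy
    exact h2 (by linear_combination hx + hy)

theorem fPoly_coeff_succ {R : Type*} [CommRing R] {n : ℕ} {p : R[X]} (hp : p.natDegree < n)
    (hp0 : p.coeff 0 = 0) : fPoly n (fun i ↦ p.coeff (i + 1)) = X ^ n + p := by
  obtain ⟨m, rfl⟩ := Nat.exists_eq_add_of_lt (Nat.zero_le _ |>.trans_lt hp)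
  rw [fPoly, Fin.sum_univ_eq_sum_range (fun i ↦ C (p.coeff (i + 1)) * X ^ (i + 1))]
  conv_rhs => rw [p.as_sum_range_C_mul_X_pow' hp, Finset.sum_range_succ', hp0]
  simp

theorem exists_fPoly_natDegree_Dpoly_pos_squarefree [IsAlgClosed K] {n : ℕ} (hn : 2 ≤ n)
    (h2 : (2 : K) ≠ 0) :
    ∃ a : Fin (n - 1) → K,
      0 < (Dpoly (fPoly n a)).natDegree ∧ Squarefree (Dpoly (fPoly n a)) := by
  suffices ∃ p : K[X], p.natDegree < n ∧ p.coeff 0 = 0 ∧ IsMorse (X ^ n + p) ∧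
      0 < (derivative (X ^ n + p)).natDegree by
    obtain ⟨p, hp, hp0, hmorse, hdeg⟩ := this
    refine ⟨fun i ↦ p.coeff (i + 1), ?_⟩
    rw [fPoly_coeff_succ hp hp0,
      natDegree_Dpoly _ hmorse.derivative_ne_zero (IsAlgClosed.splits _)]
    exact ⟨hdeg, hmorse.squarefree_Dpoly (IsAlgClosed.splits _)⟩
  by_cases hn0 : (n : K) = 0
  · have hn3 : 3 ≤ n := by
      by_contra! h
      obtain rfl : n = 2 := by omega
      exact h2 (by exact_mod_cast hn0)
    refine ⟨X ^ 2, by rw [natDegree_X_pow]; omega, by simp, isMorse_X_pow_add_X_sq h2 hn0,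
      natDegree_pos_of_eval_derivative_ne_zero (x := 0) ?_⟩
    simp [derivative_X_pow, hn0, one_add_one_eq_two, h2]
  by_cases hn1 : (n : K) = 1
  · have hn3 : 3 ≤ n := by
      by_contra! h
      obtain rfl : n = 2 := by omega
      exact one_ne_zero (by push_cast at hn1; linear_combination hn1 : (1 : K) = 0)
    refine ⟨X ^ 2 + X, lt_of_le_of_lt (by compute_degree) (by omega), by simp,
      isMorse_X_pow_add_X_sq_add_X h2 hn1, natDegree_pos_of_eval_derivative_ne_zero (x := 0) ?_⟩
    simp [derivative_X_pow, one_add_one_eq_two, h2, zero_pow (by omega : n - 1 - 1 ≠ 0)]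
  · refine ⟨X, by rw [natDegree_X]; omega, by simp, isMorse_X_pow_add_X hn0 hn1,
      natDegree_pos_of_eval_derivative_ne_zero (x := 1) ?_⟩
    simp [derivative_X_pow, hn0, Nat.cast_sub (by omega : 1 ≤ n), sub_eq_zero, hn1]

end Polynomial

/-- **Non-vanishing of the discriminant**: for `q` odd and `n ≥ 2` there is a coefficient
vector `a` over the algebraic closure `F̄_q` such that `D_{f_a}(t) = disc_x(f_a(x)+t)` has
positive degree in `t` and is squarefree. -/
theorem disc_not_identically_zero (q n : ℕ) (hq : Odd q) (hn : 2 ≤ n)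
    (F : Type) [Field F] [Fintype F] (hF : Fintype.card F = q) :
    ∃ a : Fin (n - 1) → AlgebraicClosure F,
      0 < (Dpoly (fPoly n a)).natDegree ∧ Squarefree (Dpoly (fPoly n a)) := by
  have hchar : ringChar F ≠ 2 := by
    rw [Ne, FiniteField.even_card_iff_char_two, hF, Nat.odd_iff.mp hq]
    exact one_ne_zero
  have h2 : (2 : AlgebraicClosure F) ≠ 0 := by
    have := (algebraMap F (AlgebraicClosure F)).injective.ne (Ring.two_ne_zero hchar)
    rwa [map_ofNat, map_zero] at this
  exact Polynomial.exists_fPoly_natDegree_Dpoly_pos_squarefree hn h2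
end
end
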